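/- arXiv:math-ph/0608027 — 5 statements merged into one kernel-verified Lean document; each statement's English description precedes it below -/
import Mathlib

section
/- For any finite simple graph Γ with n vertices, the characteristic polynomial over 𝔽₂ of its adjacency matrix equals ∑_{i=0}^{⌊n/2⌋} m_i · x^{n-2i}, where m_i is the number of i-matchings of Γ (sets of i pairwise non-incident edges), reduced mod 2. -/
/-!
Expand `det (X - A)` over all permutations. In characteristic 2 the signs disappear, and since `A`
is symmetric the terms of `σ` and `σ⁻¹` coincide, so only involutions survive. The term of an
involution `σ` is `X ^ #(fixed points of σ)` if every 2-cycle of `σ` is an edge of the graph, and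
`0` otherwise; the 2-cycles of these involutions are exactly the matchings, and an involution with
`i` two-cycles fixes `n - 2 i` points.
-/

open Polynomial Finset Equiv Function

namespace Matrix

variable {n R : Type*} [Fintype n] [DecidableEq n] [CommRing R] [CharP R 2]

theorem IsSymm.det_eq_sum_involutions {A : Matrix n n R} (hA : A.IsSymm) :
    A.det = ∑ σ : Perm n with σ⁻¹ = σ, ∏ i, A (σ i) i := by
  have hsign (σ : Perm n) : ((Perm.sign σ : ℤ) : R) = 1 := by
    rcases Int.units_eq_one_or (Perm.sign σ) with h | h <;> simp [h, CharTwo.neg_eq]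
  have hinv (σ : Perm n) : ∏ i, A (σ⁻¹ i) i = ∏ i, A (σ i) i := by
    rw [← Equiv.prod_comp σ]
    exact prod_congr rfl fun i _ => by simp [hA.apply]
  rw [det_apply', ← sum_filter_add_sum_filter_not _ fun σ : Perm n => σ⁻¹ = σ]
  simp_rw [hsign, one_mul]
  -- `σ ↦ σ⁻¹` pairs up the remaining terms, which are equal and so cancel in characteristic 2.
  rw [add_eq_left]
  refine sum_involution (fun σ _ => σ⁻¹) (fun σ _ => by rw [hinv, CharTwo.add_self_eq_zero])
    (fun σ hσ _ => (mem_filter.mp hσ).2)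
    (fun σ hσ => by simpa [eq_comm] using (mem_filter.mp hσ).2) (fun σ _ => inv_inv σ)

end Matrix

section Matching

variable {α : Type*}

def PairwiseNonincident (s : Finset (Sym2 α)) : Prop :=
  ∀ e ∈ s, ∀ f ∈ s, e ≠ f → ∀ v : α, ¬(v ∈ e ∧ v ∈ f)

instance [DecidableEq α] [Fintype α] : DecidablePred (PairwiseNonincident (α := α)) := fun s => by
  unfold PairwiseNonincident; infer_instance

theorem PairwiseNonincident.eq_of_mk_mem {s : Finset (Sym2 α)} (hs : PairwiseNonincident s)
    {v w w' : α} (h : s(v, w) ∈ s) (h' : s(v, w') ∈ s) : w = w' := by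
  by_contra hne
  exact hs _ h _ h' (by rwa [Ne, Sym2.congr_right]) v
    ⟨Sym2.mem_mk_left v w, Sym2.mem_mk_left v w'⟩

namespace Equiv.Perm

theorem inv_eq_self_iff_involutive {σ : Perm α} : σ⁻¹ = σ ↔ Involutive σ := by
  rw [inv_eq_iff_mul_eq_one, Perm.ext_iff]
  rfl

section Involutive

variable {σ : Perm α} (hσ : Involutive σ)
include hσ

theorem mk_apply_eq_mk_apply_iff {u v : α} : s(u, σ u) = s(v, σ v) ↔ u = v ∨ u = σ v := by
  rw [Sym2.eq_iff]
  constructor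
  · rintro (⟨h, -⟩ | ⟨h, -⟩) <;> simp [h]
  · rintro (rfl | rfl)
    · simp
    · simp [hσ v]

theorem mk_apply_eq_of_mem {u v : α} (hv : v ∈ s(u, σ u)) : s(v, σ v) = s(u, σ u) :=
  (mk_apply_eq_mk_apply_iff hσ).mpr (Sym2.mem_iff.mp hv)

theorem apply_ne_self_of_mem {u v : α} (hu : σ u ≠ u) (hv : v ∈ s(u, σ u)) : σ v ≠ v := by
  rcases Sym2.mem_iff.mp hv with rfl | rfl
  · exact hu
  · rw [hσ u]; exact hu.symm

end Involutive

variable [DecidableEq α] [Fintype α]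

def movedPairs (σ : Perm α) : Finset (Sym2 α) :=
  σ.support.image fun v => s(v, σ v)

theorem mem_movedPairs {σ : Perm α} {e : Sym2 α} :
    e ∈ σ.movedPairs ↔ ∃ v, σ v ≠ v ∧ s(v, σ v) = e := by
  simp [movedPairs]

variable {σ : Perm α} (hσ : Involutive σ)
include hσ

theorem pairwiseNonincident_movedPairs : PairwiseNonincident σ.movedPairs := by
  simp only [PairwiseNonincident, mem_movedPairs]
  rintro _ ⟨u, -, rfl⟩ _ ⟨u', -, rfl⟩ hne v ⟨hv, hv'⟩
  exact hne ((mk_apply_eq_of_mem hσ hv).symm.trans (mk_apply_eq_of_mem hσ hv'))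

theorem card_support_eq_two_mul_card_movedPairs : #σ.support = 2 * #σ.movedPairs := by
  have hfiber {v : α} (hv : v ∈ σ.support) :
      #{u ∈ σ.support | s(u, σ u) = s(v, σ v)} = 2 := by
    rw [mem_support] at hv
    have : {u ∈ σ.support | s(u, σ u) = s(v, σ v)} = {v, σ v} := by
      ext u
      simp only [mem_filter, mk_apply_eq_mk_apply_iff hσ, mem_insert, mem_singleton, mem_support,
        and_iff_right_iff_imp]
      rintro (rfl | rfl)
      · exact hv
      · rw [hσ v]; exact hv.symm
    rw [this, card_pair hv.symm]
  calc #σ.support = ∑ e ∈ σ.movedPairs, #{u ∈ σ.support | s(u, σ u) = e} :=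
        card_eq_sum_card_image _ _
    _ = ∑ e ∈ σ.movedPairs, 2 := by
        refine sum_congr rfl fun e he => ?_
        obtain ⟨v, hv, rfl⟩ := mem_image.mp he
        exact hfiber hv
    _ = 2 * #σ.movedPairs := by rw [sum_const, smul_eq_mul, mul_comm]

end Equiv.Perm

variable {s : Finset (Sym2 α)} {v w : α}

open Classical in
noncomputable def mate (s : Finset (Sym2 α)) (v : α) : α :=
  if h : ∃ w, s(v, w) ∈ s then h.choose else v

theorem mate_eq_self (h : ∀ w, s(v, w) ∉ s) : mate s v = v := by
  rw [mate, dif_neg (not_exists.mpr h)]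

theorem exists_mk_mem_of_mate_ne (h : mate s v ≠ v) : ∃ w, s(v, w) ∈ s := by
  by_contra! h'
  exact h (mate_eq_self h')

namespace PairwiseNonincident

variable (hs : PairwiseNonincident s)
include hs

theorem mate_eq (h : s(v, w) ∈ s) : mate s v = w := by
  have hex : ∃ w, s(v, w) ∈ s := ⟨w, h⟩
  rw [mate, dif_pos hex]
  exact hs.eq_of_mk_mem hex.choose_spec h

theorem involutive_mate : Involutive (mate s) := by
  intro v
  by_cases h : ∃ w, s(v, w) ∈ s
  · obtain ⟨w, hw⟩ := h
    rw [hs.mate_eq hw, hs.mate_eq (Sym2.eq_swap ▸ hw)]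
  · rw [not_exists] at h
    rw [mate_eq_self h, mate_eq_self h]

variable [DecidableEq α] [Fintype α]

theorem movedPairs_toPerm_mate (hdiag : ∀ e ∈ s, ¬e.IsDiag) :
    (hs.involutive_mate.toPerm _).movedPairs = s := by
  ext e
  simp only [Perm.mem_movedPairs, Involutive.coe_toPerm]
  constructor
  · rintro ⟨v, hv, rfl⟩
    obtain ⟨w, hw⟩ := exists_mk_mem_of_mate_ne hv
    rwa [hs.mate_eq hw]
  · intro he
    induction e using Sym2.ind with | h a b => ?_
    have hab : a ≠ b := by simpa using hdiag _ he
    exact ⟨a, by rw [hs.mate_eq he]; exact hab.symm, by rw [hs.mate_eq he]⟩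

theorem two_mul_card_le (hdiag : ∀ e ∈ s, ¬e.IsDiag) : 2 * #s ≤ Fintype.card α := by
  rw [← hs.movedPairs_toPerm_mate hdiag,
    ← Perm.card_support_eq_two_mul_card_movedPairs hs.involutive_mate]
  exact card_le_univ _

end PairwiseNonincident

theorem mate_movedPairs [DecidableEq α] [Fintype α] {σ : Perm α} (hσ : Involutive σ) :
    mate σ.movedPairs = σ := by
  funext v
  by_cases hv : σ v = v
  · rw [hv]
    refine mate_eq_self fun w hw => ?_
    obtain ⟨u, hu, he⟩ := Perm.mem_movedPairs.mp hw
    exact Perm.apply_ne_self_of_mem hσ hu (he ▸ Sym2.mem_mk_left v w) hv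
  · exact (Perm.pairwiseNonincident_movedPairs hσ).mate_eq (Perm.mem_movedPairs.mpr ⟨v, hv, rfl⟩)

end Matching

namespace SimpleGraph

variable {V : Type*} [Fintype V] [DecidableEq V] (G : SimpleGraph V) [DecidableRel G.Adj]

def matchings : Finset (Finset (Sym2 V)) :=
  {s ∈ G.edgeFinset.powerset | PairwiseNonincident s}

variable {G} in
theorem mem_matchings {s : Finset (Sym2 V)} :
    s ∈ G.matchings ↔ s ⊆ G.edgeFinset ∧ PairwiseNonincident s := by
  rw [matchings, mem_filter, mem_powerset]

theorem sum_involutions_eq_sum_matchings {M : Type*} [AddCommMonoid M] (f : ℕ → M) :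
    ∑ σ : Perm V with σ⁻¹ = σ ∧ ∀ v, σ v ≠ v → G.Adj v (σ v), f #σ.support =
      ∑ s ∈ G.matchings, f (2 * #s) := by
  have mem_involutions {σ : Perm V} :
      σ ∈ ({σ | σ⁻¹ = σ ∧ ∀ v, σ v ≠ v → G.Adj v (σ v)} : Finset (Perm V)) ↔
        Involutive σ ∧ ∀ v, σ v ≠ v → G.Adj v (σ v) := by
    rw [mem_filter, Perm.inv_eq_self_iff_involutive, and_iff_right (mem_univ σ)]
  refine sum_bij' (fun σ _ => σ.movedPairs)
    (fun s hs => (mem_matchings.mp hs).2.involutive_mate.toPerm _) ?_ ?_ ?_ ?_ ?_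
  · intro σ hσ
    obtain ⟨hσ, hadj⟩ := mem_involutions.mp hσ
    refine mem_matchings.mpr ⟨fun e he => ?_, Perm.pairwiseNonincident_movedPairs hσ⟩
    obtain ⟨v, hv, rfl⟩ := Perm.mem_movedPairs.mp he
    exact mem_edgeFinset.mpr (hadj v hv)
  · intro s hs
    obtain ⟨hsub, hs⟩ := mem_matchings.mp hs
    refine mem_involutions.mpr ⟨hs.involutive_mate, fun v hv => ?_⟩
    obtain ⟨w, hw⟩ := exists_mk_mem_of_mate_ne hv
    simpa [hs.mate_eq hw] using mem_edgeFinset.mp (hsub hw)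
  · intro σ hσ
    exact Perm.ext fun v => congrFun (mate_movedPairs (mem_involutions.mp hσ).1) v
  · intro s hs
    obtain ⟨hsub, hs⟩ := mem_matchings.mp hs
    exact hs.movedPairs_toPerm_mate fun e he => G.not_isDiag_of_mem_edgeFinset (hsub he)
  · intro σ hσ
    rw [Perm.card_support_eq_two_mul_card_movedPairs (mem_involutions.mp hσ).1]

variable {R : Type*} [CommRing R] [CharP R 2]

theorem charmatrix_adjMatrix_apply (i j : V) :
    (G.adjMatrix R).charmatrix i j = if i = j then X else if G.Adj i j then 1 else 0 := by
  by_cases h : i = j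
  · subst h; simp [Matrix.charmatrix_apply_eq]
  · simp [h, CharTwo.neg_eq, apply_ite C]

theorem prod_charmatrix_adjMatrix_apply_perm (σ : Perm V) :
    ∏ i, (G.adjMatrix R).charmatrix (σ i) i =
      if ∀ v, σ v ≠ v → G.Adj v (σ v) then X ^ (Fintype.card V - #σ.support) else 0 := by
  have hfix : #{v | σ v = v} = Fintype.card V - #σ.support := by
    rw [← card_compl]
    congr 1
    ext
    simp
  simp_rw [charmatrix_adjMatrix_apply]
  rw [prod_ite, prod_const, prod_boole, hfix, mul_ite, mul_one, mul_zero]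
  simp only [mem_filter, mem_univ, true_and, G.adj_comm (σ _), ne_eq]

theorem charpoly_adjMatrix_eq_sum_X_pow :
    (G.adjMatrix R).charpoly = ∑ s ∈ G.matchings, X ^ (Fintype.card V - 2 * #s) := by
  have hsymm : (G.adjMatrix R).charmatrix.IsSymm := by
    rw [Matrix.IsSymm, ← Matrix.charmatrix_transpose, G.isSymm_adjMatrix]
  rw [Matrix.charpoly, hsymm.det_eq_sum_involutions]
  simp_rw [prod_charmatrix_adjMatrix_apply_perm]
  rw [← sum_filter, filter_filter]
  exact G.sum_involutions_eq_sum_matchings fun k => X ^ (Fintype.card V - k)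

end SimpleGraph

open Polynomial Finset in
/-- The characteristic polynomial over 𝔽₂ of the adjacency matrix of a finite simple
graph equals ∑_{i=0}^{⌊n/2⌋} mᵢ · x^(n-2i), where mᵢ is the number of i-matchings. -/
theorem charpoly_adjMatrix_eq_sum_matchings
    {V : Type*} [Fintype V] [DecidableEq V] (G : SimpleGraph V) [DecidableRel G.Adj] :
    (G.adjMatrix (ZMod 2)).charpoly =
      ∑ i ∈ Finset.range (Fintype.card V / 2 + 1),
        (C ((Nat.card {s : Finset (Sym2 V) // s ⊆ G.edgeFinset ∧ s.card = i ∧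
            ∀ e ∈ s, ∀ f ∈ s, e ≠ f → ∀ v : V, ¬(v ∈ e ∧ v ∈ f)} : ℕ) : ZMod 2)) *
          X ^ (Fintype.card V - 2 * i) := by
  have hcard (i : ℕ) : Nat.card {s : Finset (Sym2 V) // s ⊆ G.edgeFinset ∧ s.card = i ∧
      ∀ e ∈ s, ∀ f ∈ s, e ≠ f → ∀ v : V, ¬(v ∈ e ∧ v ∈ f)} = #{s ∈ G.matchings | #s = i} := by
    rw [Nat.card_eq_fintype_card, Fintype.card_subtype]
    congr 1
    ext s
    simp only [mem_filter, mem_univ, true_and, SimpleGraph.mem_matchings, PairwiseNonincident]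
    tauto
  have hrange (s) (hs : s ∈ G.matchings) : #s ∈ range (Fintype.card V / 2 + 1) := by
    obtain ⟨hsub, hs⟩ := SimpleGraph.mem_matchings.mp hs
    have := hs.two_mul_card_le fun e he => G.not_isDiag_of_mem_edgeFinset (hsub he)
    rw [mem_range]
    omega
  rw [G.charpoly_adjMatrix_eq_sum_X_pow,
    ← sum_fiberwise_of_maps_to' hrange fun i => (X : (ZMod 2)[X]) ^ (Fintype.card V - 2 * i)]
  refine sum_congr rfl fun i _ => ?_
  rw [sum_const, nsmul_eq_mul, hcard, map_natCast]
end

section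
/- Define the Fibonacci polynomials over 𝔽₂ by F₀ = 0, F₁ = 1, F_{n+1} = x·F_n + F_{n-1}. Then for every r ≥ 1 with q = 2^r, one has F_{q-1} + F_{q+1} = x^q in 𝔽₂[x]. -/
open Polynomial

/-- The Fibonacci polynomials over 𝔽₂. -/
noncomputable def Fib2 : ℕ → Polynomial (ZMod 2)
  | 0 => 0
  | 1 => 1
  | n + 2 => X * Fib2 (n + 1) + Fib2 n

lemma fib2_add (m : ℕ) : ∀ n : ℕ,
    Fib2 (m + n + 1) = Fib2 (m + 1) * Fib2 (n + 1) + Fib2 m * Fib2 n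
  | 0 => by simp [Fib2]
  | 1 => by
      show Fib2 (m + 2) = _
      simp [Fib2]; ring
  | n + 2 => by
      have h1 := fib2_add m (n + 1)
      have h0 := fib2_add m n
      show Fib2 (m + n + 3) = _
      have : Fib2 (m + n + 3) = X * Fib2 (m + n + 2) + Fib2 (m + n + 1) := rfl
      rw [this]
      have e1 : m + n + 2 = m + (n + 1) + 1 := by ring
      rw [e1, h1, h0]
      show _ = Fib2 (m+1) * (X * Fib2 (n+2) + Fib2 (n+1)) + Fib2 m * (X * Fib2 (n+1) + Fib2 n)
      ring

lemma fib2_key (n : ℕ) :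
    Fib2 (2*n+1) + Fib2 (2*n+3) = (Fib2 n + Fib2 (n+2))^2 := by
  have h1 : Fib2 (2*n+1) = Fib2 (n+1) * Fib2 (n+1) + Fib2 n * Fib2 n := by
    have := fib2_add n n; rw [← this]; ring_nf
  have h2 : Fib2 (2*n+3) = Fib2 (n+2) * Fib2 (n+2) + Fib2 (n+1) * Fib2 (n+1) := by
    have := fib2_add (n+1) (n+1)
    rw [show (n+1) + (n+1) + 1 = 2*n+3 by ring] at this
    rw [this]
  have hc := CharTwo.add_self_eq_zero (Fib2 (n+1) * Fib2 (n+1))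
  have hc2 := CharTwo.add_self_eq_zero (Fib2 n * Fib2 (n+2))
  rw [h1, h2]
  linear_combination hc - hc2

theorem fib2_sub_add_eq_X_pow (r : ℕ) (hr : 1 ≤ r) :
    Fib2 (2 ^ r - 1) + Fib2 (2 ^ r + 1) = X ^ (2 ^ r) := by
  obtain ⟨s, rfl⟩ := Nat.exists_eq_add_of_le hr
  clear hr
  induction s with
  | zero =>
      show Fib2 1 + Fib2 3 = X ^ 2
      have h3 : Fib2 3 = X * (X * 1 + 0) + 1 := rfl
      have hc := CharTwo.add_self_eq_zero (1 : Polynomial (ZMod 2))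
      rw [h3, show Fib2 1 = 1 from rfl]
      linear_combination hc
  | succ s ih =>
      have hpos : 1 ≤ 2 ^ (1 + s) := Nat.one_le_two_pow
      set m := 2 ^ (1 + s) - 1 with hm
      have hm1 : 2 ^ (1 + s) = m + 1 := by omega
      have h2 : 2 ^ (1 + (s+1)) = 2 * (m + 1) := by
        rw [show 1 + (s+1) = (1+s) + 1 by ring, pow_succ, hm1]; ring
      have e1 : 2 ^ (1 + (s+1)) - 1 = 2*m + 1 := by omega
      have e2 : 2 ^ (1 + (s+1)) + 1 = 2*m + 3 := by omega
      rw [e1, e2, fib2_key m]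
      rw [hm1, show m + 1 + 1 = m + 2 from rfl] at ih
      rw [ih, ← pow_mul, h2, Nat.mul_comm]
end

section
/- With Fibonacci polynomials over 𝔽₂ defined by F₀=0, F₁=1, F_{n+1}=xF_n+F_{n-1}, and q = 2^r, for every z ∈ 𝔽_q^× one has F_{q-1}(z) = z·(Tr_{𝔽_q/𝔽₂}(z⁻¹))² and F_{q+1}(z) = z·(1 + Tr_{𝔽_q/𝔽₂}(z⁻¹))². -/
open Polynomial Finset

lemma Fib2_add_two (n : ℕ) : Fib2 (n + 2) = X * Fib2 (n + 1) + Fib2 n := rfl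

lemma two_eq_zero' : (2 : Polynomial (ZMod 2)) = 0 := CharTwo.two_eq_zero

lemma Fib2_double (n : ℕ) :
    Fib2 (2 * n) = X * Fib2 n ^ 2 ∧ Fib2 (2 * n + 1) = Fib2 (n + 1) ^ 2 + Fib2 n ^ 2 := by
  induction n with
  | zero => simp [Fib2]
  | succ n ih =>
    obtain ⟨h1, h2⟩ := ih
    have e1 : 2 * (n + 1) = (2 * n) + 2 := by ring
    have e2 : 2 * (n + 1) + 1 = (2 * n + 1) + 2 := by ring
    constructor
    · rw [e1, Fib2_add_two, h1, h2]
      linear_combination (X * Fib2 n ^ 2) * two_eq_zero'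
    · rw [e2, Fib2_add_two, Fib2_add_two, h1, h2, Fib2_add_two, CharTwo.add_sq]
      linear_combination (X ^ 2 * Fib2 n ^ 2) * two_eq_zero'

lemma Fib2_two_pow (n : ℕ) : Fib2 (2 ^ n) = X ^ (2 ^ n - 1) := by
  induction n with
  | zero => simp [Fib2]
  | succ n ih =>
    have e : (2 : ℕ) ^ (n + 1) = 2 * 2 ^ n := by ring
    rw [e, (Fib2_double (2 ^ n)).1, ih, ← pow_mul, ← pow_succ']
    congr 1
    have h1 : 1 ≤ 2 ^ n := Nat.one_le_two_pow
    omega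

lemma Fib2_two_pow_sub_one (r : ℕ) (hr : 1 ≤ r) :
    Fib2 (2 ^ r - 1) = ∑ i ∈ Finset.range r, X ^ (2 ^ r - 2 ^ (i + 1)) := by
  induction r with
  | zero => omega
  | succ r ih =>
    rcases Nat.eq_or_lt_of_le hr with h | h
    · simp [← h, Fib2]
    have hr1 : 1 ≤ r := by omega
    have h1 : 1 ≤ 2 ^ r := Nat.one_le_two_pow
    have e0 : (2 : ℕ) ^ (r + 1) = 2 * 2 ^ r := by ring
    have e1 : 2 ^ (r + 1) - 1 = 2 * (2 ^ r - 1) + 1 := by omega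
    rw [e1, (Fib2_double (2 ^ r - 1)).2, show 2 ^ r - 1 + 1 = 2 ^ r by omega,
      Fib2_two_pow, ih hr1, CharTwo.sum_sq, ← pow_mul]
    rw [Finset.sum_range_succ' (fun i => X ^ (2 ^ (r + 1) - 2 ^ (i + 1))) r,
      add_comm (X ^ ((2 ^ r - 1) * 2))]
    congr 1
    · apply Finset.sum_congr rfl
      intro i hi
      rw [← pow_mul]
      congr 1
      have hi' : i + 1 ≤ r := by simpa using hi
      have h2 : 2 ^ (i + 1) ≤ 2 ^ r := Nat.pow_le_pow_right (by norm_num) hi'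
      have e3 : (2 : ℕ) ^ (i + 1 + 1) = 2 * 2 ^ (i + 1) := by ring
      omega
    · congr 1
      have e3 : (2 : ℕ) ^ (0 + 1) = 2 := by norm_num
      omega

lemma Fib2_two_pow_add_one (r : ℕ) (hr : 1 ≤ r) :
    Fib2 (2 ^ r + 1) = X ^ (2 ^ r) + Fib2 (2 ^ r - 1) := by
  induction r with
  | zero => omega
  | succ r ih =>
    rcases Nat.eq_or_lt_of_le hr with h | h
    · rw [← h]
      norm_num [Fib2]
      ring
    have hr1 : 1 ≤ r := by omega
    have h1 : 1 ≤ 2 ^ r := Nat.one_le_two_pow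
    have e0 : (2 : ℕ) ^ (r + 1) = 2 * 2 ^ r := by ring
    have e1 : 2 ^ (r + 1) + 1 = 2 * (2 ^ r) + 1 := by omega
    have e2 : 2 ^ (r + 1) - 1 = 2 * (2 ^ r - 1) + 1 := by omega
    rw [e1, (Fib2_double (2 ^ r)).2, e2, (Fib2_double (2 ^ r - 1)).2,
      show 2 ^ r - 1 + 1 = 2 ^ r by omega, ih hr1, CharTwo.add_sq, ← pow_mul,
      show 2 ^ r * 2 = 2 ^ (r + 1) by ring]
    ring

/-- For z ∈ 𝔽_q^×, q = 2^r:  F_{q-1}(z) = z·Tr(z⁻¹)² and F_{q+1}(z) = z·(1+Tr(z⁻¹))². -/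
theorem fib2_eval_trace (r : ℕ) (hr : 1 ≤ r) (z : GaloisField 2 r) (hz : z ≠ 0) :
    aeval z (Fib2 (2 ^ r - 1)) = z * (∑ i ∈ Finset.range r, z⁻¹ ^ (2 ^ i)) ^ 2 ∧
    aeval z (Fib2 (2 ^ r + 1)) = z * (1 + ∑ i ∈ Finset.range r, z⁻¹ ^ (2 ^ i)) ^ 2 := by
  have : Fintype (GaloisField 2 r) := Fintype.ofFinite _
  have hcard : Fintype.card (GaloisField 2 r) = 2 ^ r := by
    rw [← Nat.card_eq_fintype_card, GaloisField.card 2 r (by omega)]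
  have hzq : z ^ (2 ^ r) = z := by
    rw [← hcard]; exact FiniteField.pow_card z
  have key : aeval z (Fib2 (2 ^ r - 1)) = z * (∑ i ∈ Finset.range r, z⁻¹ ^ (2 ^ i)) ^ 2 := by
    rw [Fib2_two_pow_sub_one r hr, map_sum, CharTwo.sum_sq, Finset.mul_sum]
    apply Finset.sum_congr rfl
    intro i hi
    have hi' : i + 1 ≤ r := by simpa using Finset.mem_range.mp hi
    have h2 : 2 ^ (i + 1) ≤ 2 ^ r := Nat.pow_le_pow_right (by norm_num) hi'
    rw [aeval_X_pow, pow_sub₀ z hz h2, hzq, ← pow_mul, inv_pow,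
      show 2 ^ i * 2 = 2 ^ (i + 1) by ring]
  refine ⟨key, ?_⟩
  rw [Fib2_two_pow_add_one r hr, map_add, key, aeval_X_pow, hzq, CharTwo.add_sq, one_pow,
    mul_add, mul_one]
end

section
/- Let h_r(x) = x^{2^r} + x + 1 ∈ 𝔽₂[x]. Then h_s divides h_r if and only if r = m·s for some odd m ∈ ℕ. -/
open Polynomial

/-- h_r(x) = x^(2^r) + x + 1 over 𝔽₂. -/
noncomputable def hPoly (r : ℕ) : Polynomial (ZMod 2) := X ^ (2 ^ r) + X + 1

lemma zmod2_pow_pow (a : ZMod 2) (n : ℕ) : a ^ 2 ^ n = a := by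
  have hsq : ∀ b : ZMod 2, b ^ 2 = b := by decide
  induction n with
  | zero => simp
  | succ n ih => rw [pow_succ, pow_mul, ih, hsq]

lemma hPoly_degree (n : ℕ) (hn : 1 ≤ n) : (hPoly n).degree = 2 ^ n := by
  have h2 : (2:ℕ) ≤ 2^n := by
    calc (2:ℕ) = 2^1 := rfl
    _ ≤ 2^n := Nat.pow_le_pow_right (by norm_num) hn
  have hx1 : (X + 1 : Polynomial (ZMod 2)).degree = 1 := by
    simpa using degree_X_add_C (1 : ZMod 2)
  have hlt : (X + 1 : Polynomial (ZMod 2)).degree < (X ^ (2^n) : Polynomial (ZMod 2)).degree := by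
    rw [hx1, degree_X_pow]; exact_mod_cast (by omega : (1:ℕ) < 2^n)
  rw [hPoly, add_assoc, degree_add_eq_left_of_degree_lt hlt, degree_X_pow]
  norm_cast

/-- Key congruence: `X^(2^(k*s)) ≡ X + k (mod h_s)`. -/
lemma hPoly_key (s k : ℕ) :
    hPoly s ∣ X ^ (2 ^ (k * s)) - (X + C ((k : ℕ) : ZMod 2)) := by
  have h20 : (2 : Polynomial (ZMod 2)) = 0 := CharTwo.two_eq_zero
  induction k with
  | zero => simp
  | succ k ih =>
    have h1 : hPoly s ∣ (X ^ (2 ^ (k * s)) : Polynomial (ZMod 2)) ^ (2 ^ s)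
        - (X + C ((k : ℕ) : ZMod 2)) ^ (2 ^ s) :=
      dvd_trans ih (sub_dvd_pow_sub_pow _ _ _)
    have h2 : ((X : Polynomial (ZMod 2)) ^ (2 ^ (k * s))) ^ (2 ^ s)
        = X ^ (2 ^ ((k + 1) * s)) := by
      rw [← pow_mul, ← pow_add, add_mul, one_mul]
    have h3 : ((X : Polynomial (ZMod 2)) + C ((k : ℕ) : ZMod 2)) ^ (2 ^ s)
        = X ^ (2 ^ s) + C ((k : ℕ) : ZMod 2) := by
      rw [add_pow_char_pow (p := 2), ← map_pow, zmod2_pow_pow]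
    rw [h2, h3] at h1
    have h4 : hPoly s ∣ (X ^ (2 ^ s) + C ((k : ℕ) : ZMod 2))
        - (X + C (((k + 1 : ℕ)) : ZMod 2)) := by
      have heq : (X ^ (2 ^ s) + C ((k : ℕ) : ZMod 2))
          - (X + C (((k + 1 : ℕ)) : ZMod 2)) = hPoly s := by
        rw [Nat.cast_add, Nat.cast_one, map_add, map_one, hPoly]
        linear_combination (-X - 1) * h20
      rw [heq]
    have h6 := dvd_add h1 h4
    rwa [sub_add_sub_cancel] at h6

theorem hPoly_dvd_iff (r s : ℕ) (hr : 1 ≤ r) (hs : 1 ≤ s) :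
    hPoly s ∣ hPoly r ↔ ∃ m : ℕ, Odd m ∧ r = m * s := by
  have hdeg := hPoly_degree s hs
  have h20 : (2 : Polynomial (ZMod 2)) = 0 := CharTwo.two_eq_zero
  constructor
  · intro hdvd
    obtain ⟨q, t, hqt, htlt⟩ : ∃ q t, q * s + t = r ∧ t < s :=
      ⟨r / s, r % s, by rw [mul_comm]; exact Nat.div_add_mod r s, Nat.mod_lt _ (by omega)⟩
    -- X^(2^r) ≡ X^(2^t) + q  (mod h_s)
    have h1 : hPoly s ∣ (X ^ (2 ^ (q * s)) : Polynomial (ZMod 2)) ^ (2 ^ t)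
        - (X + C ((q : ℕ) : ZMod 2)) ^ (2 ^ t) :=
      dvd_trans (hPoly_key s q) (sub_dvd_pow_sub_pow _ _ _)
    have h2 : ((X : Polynomial (ZMod 2)) ^ (2 ^ (q * s))) ^ (2 ^ t) = X ^ (2 ^ r) := by
      rw [← pow_mul, ← pow_add, hqt]
    have h3 : ((X : Polynomial (ZMod 2)) + C ((q : ℕ) : ZMod 2)) ^ (2 ^ t)
        = X ^ (2 ^ t) + C ((q : ℕ) : ZMod 2) := by
      rw [add_pow_char_pow (p := 2), ← map_pow, zmod2_pow_pow]
    rw [h2, h3] at h1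
    -- hence h_s divides g := X^(2^t) + X + 1 + q
    have h5 : hPoly s ∣ X ^ (2 ^ t) + X + 1 + C ((q : ℕ) : ZMod 2) := by
      have hd := dvd_sub hdvd h1
      have heq : hPoly r - (X ^ (2 ^ r) - (X ^ (2 ^ t) + C ((q : ℕ) : ZMod 2)))
          = X ^ (2 ^ t) + X + 1 + C ((q : ℕ) : ZMod 2) := by
        rw [hPoly]; ring
      rwa [heq] at hd
    by_cases ht0 : t = 0
    · -- remainder zero: g = C (1 + q)
      rw [ht0] at h5 hqt
      have h6 : hPoly s ∣ C (((1 + q : ℕ)) : ZMod 2) := by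
        have heq : (X ^ (2 ^ 0) + X + 1 + C ((q : ℕ) : ZMod 2) : Polynomial (ZMod 2))
            = C (((1 + q : ℕ)) : ZMod 2) := by
          rw [Nat.cast_add, Nat.cast_one, map_add, map_one, pow_zero, pow_one]
          linear_combination X * h20
        rwa [heq] at h5
      have h7 : C (((1 + q : ℕ)) : ZMod 2) = 0 := by
        by_contra hne
        have hd0 : (C (((1 + q : ℕ)) : ZMod 2)).degree = 0 := degree_C (by
          intro h0; exact hne (by rw [h0, map_zero]))
        have hz := Polynomial.eq_zero_of_dvd_of_degree_lt h6 (by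
          rw [hd0, hdeg]
          exact_mod_cast (by positivity : (0:ℕ) < 2 ^ s))
        exact hne hz
      have h8 : (((1 + q : ℕ)) : ZMod 2) = 0 := by
        have hc := congrArg (fun p => Polynomial.coeff p 0) h7
        simpa using hc
      rw [ZMod.natCast_eq_zero_iff, Nat.dvd_iff_mod_eq_zero] at h8
      exact ⟨q, by rw [Nat.odd_iff]; omega, by omega⟩
    · -- 1 ≤ t < s : contradiction by degrees
      exfalso
      have htt : 1 ≤ t := by omega
      have h2t : (2:ℕ) ≤ 2 ^ t := by
        calc (2:ℕ) = 2^1 := rfl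
        _ ≤ 2^t := Nat.pow_le_pow_right (by norm_num) htt
      have hle : (X + 1 + C ((q : ℕ) : ZMod 2) : Polynomial (ZMod 2)).degree ≤ 1 := by
        refine le_trans (degree_add_le _ _) (max_le ?_ ?_)
        · simpa using (degree_X_add_C (1 : ZMod 2)).le
        · exact le_trans degree_C_le (by norm_num)
      have hlow : (X + 1 + C ((q : ℕ) : ZMod 2) : Polynomial (ZMod 2)).degree
          < ((X : Polynomial (ZMod 2)) ^ (2 ^ t)).degree := by
        rw [degree_X_pow]
        exact lt_of_le_of_lt hle (by exact_mod_cast (by omega : (1:ℕ) < 2 ^ t))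
      have hgdeg : (X ^ (2 ^ t) + X + 1 + C ((q : ℕ) : ZMod 2) : Polynomial (ZMod 2)).degree
          = ((2 ^ t : ℕ) : WithBot ℕ) := by
        calc (X ^ (2 ^ t) + X + 1 + C ((q : ℕ) : ZMod 2) : Polynomial (ZMod 2)).degree
            = ((X : Polynomial (ZMod 2)) ^ (2 ^ t) + (X + 1 + C ((q : ℕ) : ZMod 2))).degree := by
              ring_nf
          _ = ((X : Polynomial (ZMod 2)) ^ (2 ^ t)).degree :=
              degree_add_eq_left_of_degree_lt hlow
          _ = ((2 ^ t : ℕ) : WithBot ℕ) := degree_X_pow _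
      have hne : (X ^ (2 ^ t) + X + 1 + C ((q : ℕ) : ZMod 2) : Polynomial (ZMod 2)) ≠ 0 := by
        intro h0
        rw [h0, degree_zero] at hgdeg
        exact WithBot.natCast_ne_bot (2 ^ t) hgdeg.symm
      have hz := Polynomial.eq_zero_of_dvd_of_degree_lt h5 (by
        rw [hgdeg, hdeg]
        exact_mod_cast Nat.pow_lt_pow_right (by norm_num) htlt)
      exact hne hz
  · rintro ⟨m, hm, rfl⟩
    have hkey := hPoly_key s m
    have hone : ((m : ℕ) : ZMod 2) = 1 := by
      rw [← ZMod.natCast_mod, Nat.odd_iff.mp hm]; rfl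
    rw [hone] at hkey
    have heq : (X ^ (2 ^ (m * s)) : Polynomial (ZMod 2)) - (X + C 1) = hPoly (m * s) := by
      rw [hPoly, map_one]
      linear_combination (-X - 1) * h20
    rwa [heq] at hkey
end

section
/- Let ζ be a primitive d-th root of unity in the algebraic closure of 𝔽₂ with d odd, d > 1, and let τ ∈ 𝔽₂[x] be its minimal polynomial. Then τ is self-reciprocal (τ(x) = x^{deg τ}·τ(1/x)) if and only if deg ζ = 2·deg(ζ + ζ⁻¹), i.e., [𝔽₂(ζ) : 𝔽₂(ζ+ζ⁻¹)] = 2, and this holds if and only if 2^j ≡ −1 mod d for some j ≥ 1. -/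
open Polynomial

namespace SRaux

local notation "F" => ZMod 2

noncomputable def frob (j : ℕ) : AlgebraicClosure (ZMod 2) →ₐ[ZMod 2] AlgebraicClosure (ZMod 2) :=
  { iterateFrobenius (AlgebraicClosure (ZMod 2)) 2 j with
    commutes' := fun c => by
      simp only [RingHom.toMonoidHom_eq_coe, OneHom.toFun_eq_coe, MonoidHom.toOneHom_coe,
        MonoidHom.coe_coe, iterateFrobenius_def]
      rw [← map_pow, ZMod.pow_card_pow] }

lemma frob_apply (j : ℕ) (x : AlgebraicClosure (ZMod 2)) : frob j x = x ^ 2 ^ j := rfl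

lemma aeval_pow (x : AlgebraicClosure (ZMod 2)) (j : ℕ) (p : F[X]) :
    aeval (x ^ 2 ^ j) p = (aeval x p) ^ 2 ^ j := by
  simpa [frob_apply] using Polynomial.aeval_algHom_apply (frob j) x p

lemma hint (x : AlgebraicClosure (ZMod 2)) : IsIntegral F x := Algebra.IsIntegral.isIntegral x

lemma pow_natDegree (x : AlgebraicClosure (ZMod 2)) : x ^ 2 ^ (minpoly F x).natDegree = x := by
  have hx : IsIntegral F x := hint x
  haveI := IntermediateField.adjoin.finiteDimensional hx
  haveI : Finite (IntermediateField.adjoin F {x}) := Module.finite_of_finite F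
  haveI : Fintype (IntermediateField.adjoin F {x}) := Fintype.ofFinite _
  have key := FiniteField.pow_card
    (⟨x, IntermediateField.mem_adjoin_simple_self F x⟩ : IntermediateField.adjoin F {x})
  rw [Module.card_eq_pow_finrank (K := F), ZMod.card, IntermediateField.adjoin.finrank hx] at key
  have := congrArg Subtype.val key
  simpa using this

lemma pow_mul_self (x : AlgebraicClosure (ZMod 2)) {m : ℕ} (h : x ^ 2 ^ m = x) (c : ℕ) : x ^ 2 ^ (m * c) = x := by
  induction c with
  | zero => simp
  | succ c ih => rw [Nat.mul_succ, pow_add, pow_mul, ih, h]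

lemma natDegree_le (x : AlgebraicClosure (ZMod 2)) {r : ℕ} (hr : 1 ≤ r) (hx : x ^ 2 ^ r = x) :
    (minpoly F x).natDegree ≤ r := by
  classical
  have h2r : (1:ℕ) ≤ 2 ^ r := Nat.one_le_two_pow
  let E : Subfield (AlgebraicClosure (ZMod 2)) :=
    { carrier := {y : AlgebraicClosure (ZMod 2) | y ^ 2 ^ r = y}
      one_mem' := by simp
      mul_mem' := by
        intro a b ha hb
        simp only [Set.mem_setOf_eq, mul_pow] at *
        rw [ha, hb]
      zero_mem' := by
        simp only [Set.mem_setOf_eq]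
        exact zero_pow (by positivity)
      add_mem' := by
        intro a b ha hb
        simp only [Set.mem_setOf_eq] at *
        rw [add_pow_char_pow, ha, hb]
      neg_mem' := by
        intro a ha
        simp only [Set.mem_setOf_eq] at *
        rw [CharTwo.neg_eq, ha]
      inv_mem' := by
        intro a ha
        simp only [Set.mem_setOf_eq] at *
        rw [inv_pow, ha] }
  have hEmem : ∀ y : AlgebraicClosure (ZMod 2), y ∈ E ↔ y ^ 2 ^ r = y := fun y => Iff.rfl
  let E' : IntermediateField F (AlgebraicClosure (ZMod 2)) := E.toIntermediateField (fun c => by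
    rw [hEmem, ← map_pow, ZMod.pow_card_pow])
  have hfin : (E : Set (AlgebraicClosure (ZMod 2))).Finite := by
    have hne : (X ^ 2 ^ r - X : (AlgebraicClosure (ZMod 2))[X]) ≠ 0 :=
      FiniteField.X_pow_card_pow_sub_X_ne_zero _ (by omega) one_lt_two
    apply Set.Finite.subset (Polynomial.finite_setOf_isRoot hne)
    intro y hy
    simp only [Set.mem_setOf_eq, Polynomial.IsRoot, eval_sub, eval_pow, eval_X, sub_eq_zero]
    exact hy
  haveI : Finite E' := hfin.to_subtype
  haveI : Fintype E' := Fintype.ofFinite _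
  haveI : FiniteDimensional F E' := Module.Finite.of_finite
  have hxE : x ∈ E' := hx
  have hmin : minpoly F x = minpoly F (⟨x, hxE⟩ : E') := by
    simpa using minpoly.algHom_eq E'.val (Subtype.val_injective) (⟨x, hxE⟩ : E')
  have h1 : (minpoly F x).natDegree ≤ Module.finrank F E' := by
    rw [hmin]; exact minpoly.natDegree_le _
  have hcard : Fintype.card E' ≤ 2 ^ r := by
    have hne : (X ^ 2 ^ r - X : (AlgebraicClosure (ZMod 2))[X]) ≠ 0 :=
      FiniteField.X_pow_card_pow_sub_X_ne_zero _ (by omega) one_lt_two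
    set P := (X ^ 2 ^ r - X : (AlgebraicClosure (ZMod 2))[X]) with hP
    have hf : Function.Injective
        (fun y : E' => (⟨y.1, by
          rw [Multiset.mem_toFinset, Polynomial.mem_roots hne]
          have hy := y.2
          simp only [hP, Polynomial.IsRoot, eval_sub, eval_pow, eval_X, sub_eq_zero]
          exact hy⟩ : {z // z ∈ P.roots.toFinset})) := by
      intro a b hab
      have : (⟨(a : AlgebraicClosure (ZMod 2)), _⟩ : {z // z ∈ P.roots.toFinset}).1
          = (⟨(b : AlgebraicClosure (ZMod 2)), _⟩ : {z // z ∈ P.roots.toFinset}).1 :=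
        congrArg Subtype.val hab
      exact Subtype.ext this
    calc Fintype.card E' ≤ Fintype.card {z // z ∈ P.roots.toFinset} :=
          Fintype.card_le_of_injective _ hf
      _ = P.roots.toFinset.card := Fintype.card_coe _
      _ ≤ Multiset.card P.roots := Multiset.toFinset_card_le _
      _ ≤ P.natDegree := Polynomial.card_roots' _
      _ = 2 ^ r := FiniteField.X_pow_card_pow_sub_X_natDegree_eq _ (by omega) one_lt_two
  have h2 : Fintype.card E' = 2 ^ Module.finrank F E' := by
    have := Module.card_eq_pow_finrank (K := F) (V := E')
    rwa [ZMod.card] at this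
  have h3 : Module.finrank F E' ≤ r :=
    (Nat.pow_le_pow_iff_right one_lt_two).mp (h2 ▸ hcard)
  exact h1.trans h3

lemma pow_iff_dvd (x : AlgebraicClosure (ZMod 2)) (n : ℕ) :
    x ^ 2 ^ n = x ↔ (minpoly F x).natDegree ∣ n := by
  set m := (minpoly F x).natDegree with hmdef
  constructor
  · intro h
    have hm : 0 < m := minpoly.natDegree_pos (hint x)
    have hr : x ^ 2 ^ (n % m) = x := by
      have h1 : x ^ 2 ^ (m * (n / m)) = x := pow_mul_self x (pow_natDegree x) _
      calc x ^ 2 ^ (n % m) = (x ^ 2 ^ (m * (n / m))) ^ 2 ^ (n % m) := by rw [h1]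
        _ = x ^ 2 ^ (m * (n / m) + n % m) := by rw [← pow_mul, ← pow_add]
        _ = x ^ 2 ^ n := by rw [Nat.div_add_mod]
        _ = x := h
    rcases Nat.eq_zero_or_pos (n % m) with h0 | h0
    · exact Nat.dvd_of_mod_eq_zero h0
    · exact absurd (natDegree_le x h0 hr) (not_le.2 (Nat.mod_lt n hm))
  · rintro ⟨c, rfl⟩
    exact pow_mul_self x (pow_natDegree x) c

lemma exists_conj (x y : AlgebraicClosure (ZMod 2)) (hy : aeval y (minpoly F x) = 0) :
    ∃ i, y = x ^ 2 ^ i := by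
  classical
  set m := (minpoly F x).natDegree with hmdef
  have hm : 0 < m := minpoly.natDegree_pos (hint x)
  set g : (AlgebraicClosure (ZMod 2))[X] :=
    ∏ i ∈ Finset.range m, (X - C (x ^ 2 ^ i)) with hgdef
  have hgx : eval x g = 0 := by
    rw [hgdef, Polynomial.eval_prod]
    apply Finset.prod_eq_zero (Finset.mem_range.mpr hm)
    simp
  have hfrob : ∀ c : AlgebraicClosure (ZMod 2), Polynomial.map (frobenius (AlgebraicClosure (ZMod 2)) 2) (X - C c) = X - C (c ^ 2) := by
    intro c
    simp [Polynomial.map_sub, frobenius_def]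
  have hshift : Polynomial.map (frobenius (AlgebraicClosure (ZMod 2)) 2) g = g := by
    rw [hgdef, Polynomial.map_prod]
    have : ∀ i ∈ Finset.range m, Polynomial.map (frobenius (AlgebraicClosure (ZMod 2)) 2) (X - C (x ^ 2 ^ i))
        = X - C (x ^ 2 ^ (i + 1)) := by
      intro i _
      rw [hfrob, ← pow_mul, ← pow_succ]
    rw [Finset.prod_congr rfl this]
    have hcancel : (∏ i ∈ Finset.range m, (X - C (x ^ 2 ^ (i + 1)))) * (X - C (x ^ 2 ^ 0))
        = (∏ i ∈ Finset.range m, (X - C (x ^ 2 ^ i))) * (X - C (x ^ 2 ^ 0)) := by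
      rw [← Finset.prod_range_succ' (fun i => (X - C (x ^ 2 ^ i))) m]
      rw [Finset.prod_range_succ]
      rw [pow_natDegree x]
      simp
    exact mul_right_cancel₀ (Polynomial.X_sub_C_ne_zero _) hcancel
  have hcoeff : ∀ n : ℕ, (g.coeff n) ^ 2 = g.coeff n := by
    intro n
    have := congrArg (fun p => Polynomial.coeff p n) hshift
    simpa [Polynomial.coeff_map, frobenius_def] using this
  have hlift : g ∈ Polynomial.lifts (algebraMap F (AlgebraicClosure (ZMod 2))) := by
    rw [Polynomial.lifts_iff_coeff_lifts]
    intro n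
    have hc := hcoeff n
    have : g.coeff n * (g.coeff n - 1) = 0 := by ring_nf; linear_combination hc
    rcases mul_eq_zero.mp this with h | h
    · exact ⟨0, by simp [h]⟩
    · exact ⟨1, by rw [map_one]; rw [sub_eq_zero] at h; exact h.symm⟩
  obtain ⟨q, hq⟩ := (Polynomial.mem_lifts _).mp hlift
  have hdvd : minpoly F x ∣ q := by
    apply minpoly.dvd
    rw [Polynomial.aeval_def, ← Polynomial.eval_map, hq]
    exact hgx
  have hgy : eval y g = 0 := by
    have hmap : Polynomial.map (algebraMap F (AlgebraicClosure (ZMod 2))) (minpoly F x) ∣ g := by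
      rw [← hq]
      exact Polynomial.map_dvd _ hdvd
    obtain ⟨c, hc⟩ := hmap
    rw [hc, Polynomial.eval_mul]
    have hev : eval y (Polynomial.map (algebraMap F (AlgebraicClosure (ZMod 2))) (minpoly F x)) = 0 := by
      rw [Polynomial.eval_map, ← Polynomial.aeval_def]
      exact hy
    rw [hev, zero_mul]
  rw [hgdef, Polynomial.eval_prod, Finset.prod_eq_zero_iff] at hgy
  obtain ⟨i, _, hi⟩ := hgy
  refine ⟨i, ?_⟩
  simpa [sub_eq_zero] using hi

lemma monic_dvd_eq {p q : F[X]} (hp : p.Monic) (hq : q.Monic) (hdvd : p ∣ q)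
    (hdeg : q.natDegree ≤ p.natDegree) : p = q := by
  obtain ⟨c, rfl⟩ := hdvd
  have hc0 : c ≠ 0 := by
    rintro rfl
    rw [mul_zero] at hq
    exact hq.ne_zero rfl
  have hdegc : c.natDegree = 0 := by
    have := Polynomial.natDegree_mul hp.ne_zero hc0
    omega
  have hcu : IsUnit c := by
    rw [Polynomial.isUnit_iff_degree_eq_zero, Polynomial.degree_eq_natDegree hc0, hdegc]
    rfl
  have : c = 1 := by
    have hl : c.leadingCoeff = 1 := by
      have := hq.leadingCoeff
      rw [Polynomial.leadingCoeff_mul, hp.leadingCoeff, one_mul] at this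
      exact this
    rw [Polynomial.eq_C_of_natDegree_eq_zero hdegc] at hl ⊢
    rw [Polynomial.leadingCoeff_C] at hl
    rw [hl, map_one]
  rw [this, mul_one]

end SRaux

theorem minpoly_selfReciprocal_iff (d : ℕ) (hd : Odd d) (hd1 : 1 < d)
    (ζ : AlgebraicClosure (ZMod 2)) (hζ : orderOf ζ = d) :
    ((minpoly (ZMod 2) ζ).reverse = minpoly (ZMod 2) ζ ↔
      (minpoly (ZMod 2) ζ).natDegree =
        2 * (minpoly (ZMod 2) (ζ + ζ⁻¹)).natDegree) ∧
    ((minpoly (ZMod 2) ζ).reverse = minpoly (ZMod 2) ζ ↔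
      ∃ j : ℕ, 1 ≤ j ∧ (2 : ZMod d) ^ j = -1) := by
  classical
  haveI : NeZero d := ⟨by omega⟩
  set τ := minpoly (ZMod 2) ζ with hτdef
  set m := τ.natDegree with hmdef
  set m' := (minpoly (ZMod 2) (ζ + ζ⁻¹)).natDegree with hm'def
  have hζd : ζ ^ d = 1 := hζ ▸ pow_orderOf_eq_one ζ
  have hζ0 : ζ ≠ 0 := by
    rintro rfl
    rw [zero_pow (by omega)] at hζd
    exact zero_ne_one hζd
  have hne : (1 : ZMod d) ≠ -1 := by
    intro h
    have h2 : ((2 : ℕ) : ZMod d) = 0 := by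
      push_cast
      linear_combination h
    rw [ZMod.natCast_eq_zero_iff] at h2
    have hle : d ≤ 2 := Nat.le_of_dvd two_pos h2
    have hd2 : d = 2 := by omega
    rw [hd2] at hd
    exact (by decide : ¬ Odd 2) hd
  -- characterization of powers
  have hpow1 : ∀ n : ℕ, ζ ^ 2 ^ n = ζ ↔ (2 : ZMod d) ^ n = 1 := by
    intro n
    have h2r : (1:ℕ) ≤ 2 ^ n := Nat.one_le_two_pow
    have e1 : ζ ^ 2 ^ n = ζ ↔ ζ ^ (2 ^ n - 1) = 1 := by
      constructor
      · intro h
        have h2 : ζ ^ (2 ^ n - 1) * ζ = 1 * ζ := by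
          rw [one_mul, ← pow_succ, Nat.sub_add_cancel h2r]
          exact h
        exact mul_right_cancel₀ hζ0 h2
      · intro h
        have : ζ ^ (2 ^ n - 1 + 1) = ζ := by rw [pow_succ, h, one_mul]
        rwa [Nat.sub_add_cancel h2r] at this
    rw [e1, ← orderOf_dvd_iff_pow_eq_one, hζ,
      ← ZMod.natCast_eq_zero_iff (2 ^ n - 1) d]
    rw [Nat.cast_sub h2r]
    push_cast
    rw [sub_eq_zero]
  have hpowm1 : ∀ n : ℕ, ζ ^ 2 ^ n = ζ⁻¹ ↔ (2 : ZMod d) ^ n = -1 := by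
    intro n
    have e1 : ζ ^ 2 ^ n = ζ⁻¹ ↔ ζ ^ (2 ^ n + 1) = 1 := by
      constructor
      · intro h
        rw [pow_succ, h, inv_mul_cancel₀ hζ0]
      · intro h
        rw [pow_succ] at h
        field_simp
        exact h
    rw [e1, ← orderOf_dvd_iff_pow_eq_one, hζ,
      ← ZMod.natCast_eq_zero_iff (2 ^ n + 1) d]
    push_cast
    rw [← sub_neg_eq_add, sub_eq_zero]
  have hm : ∀ n : ℕ, (2 : ZMod d) ^ n = 1 ↔ m ∣ n := by
    intro n
    rw [← hpow1 n, hmdef, hτdef]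
    exact SRaux.pow_iff_dvd ζ n
  -- quadratic trick for η
  have hη : ∀ n : ℕ, (ζ + ζ⁻¹) ^ 2 ^ n = ζ + ζ⁻¹ ↔ (ζ ^ 2 ^ n = ζ ∨ ζ ^ 2 ^ n = ζ⁻¹) := by
    intro n
    rw [add_pow_char_pow, inv_pow]
    set w := ζ ^ 2 ^ n with hwdef
    have hw0 : w ≠ 0 := pow_ne_zero _ hζ0
    constructor
    · intro h
      have l1 : (w + w⁻¹) * (w * ζ) = w * w * ζ + w⁻¹ * w * ζ := by ring
      rw [inv_mul_cancel₀ hw0, one_mul] at l1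
      have l2 : (ζ + ζ⁻¹) * (w * ζ) = w * (ζ * ζ) + ζ⁻¹ * ζ * w := by ring
      rw [inv_mul_cancel₀ hζ0, one_mul] at l2
      have h3 : w * w * ζ + ζ = w * (ζ * ζ) + w := by
        rw [← l1, ← l2, h]
      have key : (w - ζ) * (w * ζ - 1) = 0 := by linear_combination h3
      rcases mul_eq_zero.mp key with h4 | h4
      · left; rw [← sub_eq_zero]; exact h4
      · right
        rw [sub_eq_zero] at h4
        field_simp
        exact h4
    · rintro (h | h)
      · rw [h]
      · rw [h, inv_inv, add_comm]
  have hm' : ∀ n : ℕ, ((2 : ZMod d) ^ n = 1 ∨ (2 : ZMod d) ^ n = -1) ↔ m' ∣ n := by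
    intro n
    rw [← hpow1 n, ← hpowm1 n, ← hη n, hm'def]
    exact SRaux.pow_iff_dvd (ζ + ζ⁻¹) n
  have hmpos : 0 < m := minpoly.natDegree_pos (SRaux.hint ζ)
  have hm'pos : 0 < m' := minpoly.natDegree_pos (SRaux.hint (ζ + ζ⁻¹))
  -- the arithmetic equivalence
  have harith : (∃ j : ℕ, 1 ≤ j ∧ (2 : ZMod d) ^ j = -1) ↔ m = 2 * m' := by
    constructor
    · rintro ⟨j, hj1, hj⟩
      have hm'j : m' ∣ j := (hm' j).mp (Or.inr hj)
      have hm'm : m' ∣ m := (hm' m).mp (Or.inl ((hm m).mpr dvd_rfl))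
      have hm2m' : m ∣ 2 * m' := by
        apply (hm _).mp
        rcases (hm' m').mpr dvd_rfl with h1 | h1
        · rw [mul_comm, pow_mul, h1, one_pow]
        · rw [mul_comm, pow_mul, h1, neg_one_sq]
      have hmm' : m ≠ m' := by
        intro h
        have h6 := (hm j).mpr (h ▸ hm'j)
        rw [hj] at h6
        exact hne h6.symm
      obtain ⟨t, ht⟩ := hm'm
      have htd : t ∣ 2 := by
        have h5 : m' * t ∣ m' * 2 := by
          rw [← ht]
          rwa [mul_comm 2 m'] at hm2m'
        exact (mul_dvd_mul_iff_left (by omega : m' ≠ 0)).mp h5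
      rcases Nat.prime_two.eq_one_or_self_of_dvd t htd with rfl | rfl
      · exfalso
        apply hmm'
        omega
      · omega
    · intro hm2
      rcases (hm' m').mpr dvd_rfl with h1 | h1
      · exfalso
        have h2 : m ∣ m' := (hm m').mp h1
        have := Nat.le_of_dvd hm'pos h2
        omega
      · exact ⟨m', hm'pos, h1⟩
  -- roots of reverse
  haveI : Invertible ζ := invertibleOfNonzero hζ0
  have hτζ : aeval ζ τ = 0 := minpoly.aeval _ _
  have hrootrev : aeval ζ⁻¹ τ.reverse = 0 := by
    rw [Polynomial.aeval_def, ← invOf_eq_inv ζ,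
      Polynomial.eval₂_reverse_eq_zero_iff, ← Polynomial.aeval_def]
    exact hτζ
  have hτmonic : τ.Monic := minpoly.monic (SRaux.hint ζ)
  have hτ0 : τ.coeff 0 ≠ 0 := minpoly.coeff_zero_ne_zero (SRaux.hint ζ) hζ0
  have htd0 : τ.natTrailingDegree = 0 := Polynomial.natTrailingDegree_eq_zero.mpr (Or.inr hτ0)
  have hrevdeg : τ.reverse.natDegree = m := by
    rw [Polynomial.reverse_natDegree, htd0, ← hmdef]
    omega
  have hrevmonic : τ.reverse.Monic := by
    rw [Polynomial.Monic, Polynomial.reverse_leadingCoeff]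
    have h1 : τ.trailingCoeff = τ.coeff 0 := by
      rw [Polynomial.trailingCoeff, htd0]
    rw [h1]
    have h2 : ∀ c : ZMod 2, c ≠ 0 → c = 1 := by decide
    exact h2 _ hτ0
  have hB : τ.reverse = τ ↔ ∃ j : ℕ, 1 ≤ j ∧ (2 : ZMod d) ^ j = -1 := by
    constructor
    · intro hrev
      have hrootτ : aeval ζ⁻¹ τ = 0 := by rw [← hrev]; exact hrootrev
      obtain ⟨i, hi⟩ := SRaux.exists_conj ζ ζ⁻¹ hrootτ
      have h2i : (2 : ZMod d) ^ i = -1 := (hpowm1 i).mp hi.symm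
      refine ⟨i, ?_, h2i⟩
      rcases Nat.eq_zero_or_pos i with rfl | h
      · exfalso
        apply hne
        rw [pow_zero] at h2i
        exact h2i
      · exact h
    · rintro ⟨j, hj1, hj⟩
      have hζj : ζ ^ 2 ^ j = ζ⁻¹ := (hpowm1 j).mpr hj
      have hroot : aeval ζ⁻¹ τ = 0 := by
        rw [← hζj, SRaux.aeval_pow, hτζ]
        exact zero_pow (by positivity)
      have heq : τ = minpoly (ZMod 2) ζ⁻¹ :=
        minpoly.eq_of_irreducible_of_monic (minpoly.irreducible (SRaux.hint ζ)) hroot hτmonic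
      have hdvd : minpoly (ZMod 2) ζ⁻¹ ∣ τ.reverse := minpoly.dvd _ _ hrootrev
      rw [← heq] at hdvd
      exact (SRaux.monic_dvd_eq hτmonic hrevmonic hdvd (le_of_eq hrevdeg)).symm
  exact ⟨hB.trans harith, hB⟩
end
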